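/- Assume t ≥ 2 and a_1 = 0 (so f(0) = c_1 ≠ 0 and f has exactly a_t complex roots counted with multiplicity, all nonzero). Let σ, σ' ∈ ArchTrop(f) satisfy σ' > σ + 2·log(t−1) and (σ, σ') ∩ ArchTrop(f) = ∅, and let m ∈ {1,…,t} be the (necessarily unique) index such that a_m·v + log|c_m| > a_i·v + log|c_i| for all i ≠ m and all v ∈ (σ, σ'). Then f has exactly a_m roots ζ ∈ ℂ, counted with multiplicity, satisfying log|ζ| ≤ σ + log(t−1), and exactly a_t − a_m roots, counted with multiplicity, satisfying log|ζ| ≥ σ' − log(t−1). -/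

import Mathlib

/-- Evaluation of the univariate polynomial `f(x) = ∑ i, c i * x^{a i}` (with integer
exponents) at `x ∈ ℂ∖{0}`. -/
noncomputable def upoly {t : ℕ} (c : Fin t → ℂ) (a : Fin t → ℤ) (x : ℂ) : ℂ :=
  ∑ i, c i * x ^ a i

/-- `|c_i| e^{a_i v}`, the `i`-th tropical term of `f` at `v ∈ ℝ`. -/
noncomputable def tropTerm1 {t : ℕ} (c : Fin t → ℂ) (a : Fin t → ℤ) (v : ℝ) (i : Fin t) : ℝ :=
  ‖c i‖ * Real.exp ((a i : ℝ) * v)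

/-- `ArchTrop(f) ⊆ ℝ`: the set of `v` where the maximum of `|c_i| e^{a_i v}` is attained
at least twice. -/
noncomputable def ArchTrop1 {t : ℕ} (c : Fin t → ℂ) (a : Fin t → ℤ) : Set ℝ :=
  {v | ∃ i k : Fin t, i ≠ k ∧ (∀ l, tropTerm1 c a v l ≤ tropTerm1 c a v i) ∧
      tropTerm1 c a v i = tropTerm1 c a v k}

attribute [local instance] Classical.propDecidable

/-- `f` as a polynomial in `ℂ[x]` (exponents `a i` are nonnegative when `a_1 = 0` and
`a` is strictly increasing). -/
noncomputable def upolyP {t : ℕ} (c : Fin t → ℂ) (a : Fin t → ℤ) : Polynomial ℂ :=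
  ∑ i, Polynomial.C (c i) * Polynomial.X ^ (a i).toNat

/-!
For `v` strictly between `σ + log (t - 1)` and `σ' - log (t - 1)`, the `m`-th term of `f` dominates
every other term by a factor larger than `t - 1` on the circle `|z| = e^v`: the lines
`a_i v + log |c_i|` lie below `a_m v + log |c_m|` on `[σ, σ']` and have integer slopes different
from `a_m`, so they drop below it by more than `log (t - 1)` at distance more than `log (t - 1)`
from both endpoints. Hence the `m`-th term beats the sum of the others, and Rouché's theorem,
which for polynomials follows from the argument principle, puts exactly `a_m` roots in the disc
`|z| < e^v`. Since this count does not depend on `v`, no root has `log |ζ|` in the gap, which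
gives both counts, the second because `f` has `a_t` roots in all.
-/

open Polynomial Metric Complex Real

theorem circleIntegral.integral_sub_inv_of_notMem_sphere {c w : ℂ} {R : ℝ} (hR : 0 < R)
    (hw : w ∉ sphere c R) :
    (∮ z in C(c, R), (z - w)⁻¹) = if w ∈ ball c R then 2 * π * I else 0 := by
  split_ifs with hball
  · exact circleIntegral.integral_sub_inv_of_mem_ball hball
  · have hw' : w ∉ closedBall c R := by
      rw [← ball_union_sphere]; exact fun h => h.elim hball hw
    refine DiffContOnCl.circleIntegral_eq_zero hR.le (DifferentiableOn.diffContOnCl ?_)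
    rw [closure_ball c hR.ne']
    exact (differentiableOn_id.sub_const w).inv
      fun z hz => sub_ne_zero.2 (ne_of_mem_of_not_mem hz hw')

theorem circleIntegrable_multiset_sum_sub_inv {c : ℂ} {R : ℝ} (hR : 0 ≤ R) {s : Multiset ℂ}
    (hs : ∀ w ∈ s, w ∉ sphere c R) :
    CircleIntegrable (fun z => (s.map fun w => (z - w)⁻¹).sum) c R :=
  (continuousOn_multiset_sum s fun w hw => (continuousOn_id.sub continuousOn_const).inv₀
    fun _ hz => sub_ne_zero.2 (ne_of_mem_of_not_mem hz (hs w hw))).circleIntegrable hR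

theorem circleIntegral.integral_multiset_sum_sub_inv {c : ℂ} {R : ℝ} (hR : 0 < R)
    (s : Multiset ℂ) (hs : ∀ w ∈ s, w ∉ sphere c R) :
    (∮ z in C(c, R), (s.map fun w => (z - w)⁻¹).sum) =
      2 * π * I * (s.filter (· ∈ ball c R)).card := by
  induction s using Multiset.induction_on with
  | empty => simp [circleIntegral]
  | cons w s ih =>
    have hs' : ∀ x ∈ s, x ∉ sphere c R := fun x hx => hs x (Multiset.mem_cons_of_mem hx)
    have hw : w ∉ sphere c R := hs w (Multiset.mem_cons_self w s)
    have hint_w : CircleIntegrable (fun z => (z - w)⁻¹) c R := by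
      simpa [abs_of_pos hR] using Or.inr hw
    simp only [Multiset.map_cons, Multiset.sum_cons]
    rw [circleIntegral.integral_add hint_w (circleIntegrable_multiset_sum_sub_inv hR.le hs'),
      ih hs', circleIntegral.integral_sub_inv_of_notMem_sphere hR hw, Multiset.filter_cons]
    split_ifs <;> simp; ring

theorem Polynomial.circleIntegral_eval_derivative_div_eval {p : ℂ[X]} {c : ℂ} {R : ℝ}
    (hR : 0 < R) (hp : ∀ z ∈ sphere c R, p.eval z ≠ 0) :
    (∮ z in C(c, R), p.derivative.eval z / p.eval z) =
      2 * π * I * (p.roots.filter (· ∈ ball c R)).card := by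
  have hroots : ∀ w ∈ p.roots, w ∉ sphere c R := fun w hw hs => hp w hs (isRoot_of_mem_roots hw)
  rw [← circleIntegral.integral_multiset_sum_sub_inv hR _ hroots]
  refine circleIntegral.integral_congr hR.le fun z hz => ?_
  simp only [(IsAlgClosed.splits p).eval_derivative_div_eval_of_ne_zero (hp z hz), one_div]

theorem continuousOn_parametric_circleIntegral {X : Type*} [TopologicalSpace X] {s : Set X}
    {F : X → ℂ → ℂ} {c : ℂ} {R : ℝ} (hR : 0 ≤ R)
    (hF : ContinuousOn (Function.uncurry F) (s ×ˢ sphere c R)) :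
    ContinuousOn (fun x => ∮ z in C(c, R), F x z) s := by
  rw [continuousOn_iff_continuous_domRestrict]
  simp only [circleIntegral, deriv_circleMap]
  refine intervalIntegral.continuous_parametric_intervalIntegral_of_continuous' ?_ 0 (2 * π)
  have hmaps : ∀ p : s × ℝ, (p.1.1, circleMap c R p.2) ∈ s ×ˢ sphere c R :=
    fun p => ⟨p.1.2, circleMap_mem_sphere c hR p.2⟩
  have hFc : Continuous fun p : s × ℝ => F p.1 (circleMap c R p.2) :=
    hF.comp_continuous (by fun_prop) hmaps
  exact (((continuous_circleMap 0 R).comp continuous_snd).mul continuous_const).smul hFc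

theorem Polynomial.card_roots_filter_mem_ball_add_of_norm_lt {g q : ℂ[X]} {c : ℂ} {R : ℝ}
    (hR : 0 < R) (hlt : ∀ z ∈ sphere c R, ‖q.eval z‖ < ‖g.eval z‖) :
    ((g + q).roots.filter (· ∈ ball c R)).card = (g.roots.filter (· ∈ ball c R)).card := by
  set P : ℝ → ℂ[X] := fun s => g + C (s : ℂ) * q
  have hP : ∀ s ∈ Set.Icc (0 : ℝ) 1, ∀ z ∈ sphere c R, (P s).eval z ≠ 0 := by
    intro s hs z hz h0
    have hg : g.eval z = -((s : ℂ) * q.eval z) := by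
      simp only [P, eval_add, eval_mul, eval_C] at h0
      linear_combination h0
    have hgq : ‖g.eval z‖ ≤ ‖q.eval z‖ := by
      rw [hg, norm_neg, norm_mul, Complex.norm_of_nonneg hs.1]
      exact mul_le_of_le_one_left (norm_nonneg _) hs.2
    exact (hlt z hz).not_ge hgq
  -- The count of roots of `g + s q` in the ball is the integral of its logarithmic derivative,
  -- hence continuous in `s ∈ [0, 1]`; being integer-valued, it is constant.
  set N : ℝ → ℕ := fun s => ((P s).roots.filter (· ∈ ball c R)).card
  have hN : ∀ s ∈ Set.Icc (0 : ℝ) 1,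
      (N s : ℝ) = ((2 * π * I)⁻¹ * ∮ z in C(c, R), (P s).derivative.eval z / (P s).eval z).re := by
    intro s hs
    rw [circleIntegral_eval_derivative_div_eval hR (hP s hs), ← mul_assoc,
      inv_mul_cancel₀ (by simp [pi_ne_zero]), one_mul, natCast_re]
  have hcont : ContinuousOn N (Set.Icc 0 1) := by
    rw [Nat.isClosedEmbedding_coe_real.isInducing.continuousOn_iff]
    refine ContinuousOn.congr ?_ hN
    refine (continuous_re.comp_continuousOn (continuousOn_const.mul
      (continuousOn_parametric_circleIntegral hR.le ?_)))
    refine ContinuousOn.div ?_ ?_ fun p hp => hP p.1 hp.1 p.2 hp.2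
    · simp only [P, derivative_add, derivative_C_mul, eval_add, eval_mul, eval_C]
      fun_prop
    · simp only [P, eval_add, eval_mul, eval_C]
      fun_prop
  have hN01 : N 0 = N 1 :=
    isPreconnected_Icc.constant hcont (by norm_num) (by norm_num)
  simpa [N, P] using hN01.symm

theorem Multiset.card_filter_le_and_card_filter_ge_of_card_filter_lt_eq {α : Type*}
    (s : Multiset α) (g : α → ℝ) {x y : ℝ} (hxy : x < y) {n : ℕ}
    (h : ∀ v ∈ Set.Ioo x y, (s.filter (g · < v)).card = n) :
    (s.filter (g · ≤ x)).card = n ∧ (s.filter (y ≤ g ·)).card = s.card - n := by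
  have hgap : ∀ b ∈ s, g b ∉ Set.Ioo x y := by
    intro b hb hgb
    obtain ⟨w, hbw, hwy⟩ := exists_between hgb.2
    have hle : s.filter (g · < g b) ≤ s.filter (g · < w) :=
      Multiset.monotone_filter_right s fun _ hu => hu.trans hbw
    have hne : s.filter (g · < g b) ≠ s.filter (g · < w) := by
      intro heq
      have hmem : b ∈ s.filter (g · < w) := Multiset.mem_filter.2 ⟨hb, hbw⟩
      rw [← heq, Multiset.mem_filter] at hmem
      exact lt_irrefl _ hmem.2
    have hcard := Multiset.card_lt_card (lt_of_le_of_ne hle hne)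
    rw [h _ hgb, h w ⟨hgb.1.trans hbw, hwy⟩] at hcard
    exact lt_irrefl _ hcard
  obtain ⟨v, hv⟩ := exists_between hxy
  have hlow : s.filter (g · ≤ x) = s.filter (g · < v) := Multiset.filter_congr fun b hb =>
    ⟨fun hbx => hbx.trans_lt hv.1, fun hbv => not_lt.1 fun hxb => hgap b hb ⟨hxb, hbv.trans hv.2⟩⟩
  have hhigh : s.filter (y ≤ g ·) = s.filter (¬ g · < v) := Multiset.filter_congr fun b hb =>
    ⟨fun hyb => not_lt.2 (hv.2.le.trans hyb),
      fun hvb => not_lt.1 fun hby => hgap b hb ⟨hv.1.trans_le (not_lt.1 hvb), hby⟩⟩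
  have hsplit := congrArg Multiset.card (Multiset.filter_add_not (g · < v) s)
  rw [Multiset.card_add, h v hv] at hsplit
  rw [hlow, hhigh, h v hv]
  exact ⟨rfl, by omega⟩

theorem Finset.sum_lt_of_forall_card_mul_lt {ι K : Type*} [Field K] [LinearOrder K]
    [IsStrictOrderedRing K] {s : Finset ι} {f : ι → K} {x : K} (hs : s.Nonempty)
    (h : ∀ i ∈ s, (s.card : K) * f i < x) : ∑ i ∈ s, f i < x := by
  have hlt : (s.card : K) * ∑ i ∈ s, f i < s.card * x := by
    rw [Finset.mul_sum]
    simpa using Finset.sum_lt_sum_of_nonempty hs h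
  exact lt_of_mul_lt_mul_left hlt (Nat.cast_nonneg _)

theorem affine_add_lt_of_forall_mem_Ioo_lt {α β α' β' σ σ' ℓ v : ℝ} (hslope : 1 ≤ |α' - α|)
    (h : ∀ u ∈ Set.Ioo σ σ', α * u + β < α' * u + β') (hℓ : 0 ≤ ℓ)
    (hv : v ∈ Set.Ioo (σ + ℓ) (σ' - ℓ)) : α * v + β + ℓ < α' * v + β' := by
  have hσσ' : σ < σ' := by linarith [hv.1, hv.2]
  have hends : Set.Icc σ σ' ⊆ {u | α * u + β ≤ α' * u + β'} := by
    rw [← closure_Ioo hσσ'.ne]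
    exact (closure_mono fun u hu => h u hu).trans (closure_lt_subset_le
      (f := fun u => α * u + β) (g := fun u => α' * u + β') (by fun_prop) (by fun_prop))
  have hσ : α * σ + β ≤ α' * σ + β' := hends ⟨le_rfl, hσσ'.le⟩
  have hσ' : α * σ' + β ≤ α' * σ' + β' := hends ⟨hσσ'.le, le_rfl⟩
  rcases le_abs'.1 hslope with hneg | hpos
  · nlinarith [hv.2]
  · nlinarith [hv.1]

section Tropical

variable {t : ℕ} {c : Fin t → ℂ} {a : Fin t → ℤ}

theorem tropTerm1_eq_exp {i : Fin t} (hc : c i ≠ 0) (v : ℝ) :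
    tropTerm1 c a v i = Real.exp (a i * v + Real.log ‖c i‖) := by
  rw [tropTerm1, Real.exp_add, Real.exp_log (norm_pos_iff.2 hc), mul_comm]

theorem norm_monomial_eq_tropTerm1 {i : Fin t} (ha : 0 ≤ a i) {z : ℂ} {v : ℝ}
    (hz : ‖z‖ = Real.exp v) : ‖c i * z ^ (a i).toNat‖ = tropTerm1 c a v i := by
  rw [norm_mul, norm_pow, hz, ← Real.exp_nat_mul, tropTerm1, ← Int.cast_natCast,
    Int.toNat_of_nonneg ha]

theorem sum_tropTerm1_erase_lt (ht : 2 ≤ t) (ha : Function.Injective a) (hc : ∀ i, c i ≠ 0)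
    {σ σ' : ℝ} {m : Fin t}
    (hm : ∀ v ∈ Set.Ioo σ σ', ∀ i, i ≠ m →
      (a i : ℝ) * v + Real.log ‖c i‖ < (a m : ℝ) * v + Real.log ‖c m‖)
    {v : ℝ} (hv : v ∈ Set.Ioo (σ + Real.log ((t : ℝ) - 1)) (σ' - Real.log ((t : ℝ) - 1))) :
    ∑ i ∈ Finset.univ.erase m, tropTerm1 c a v i < tropTerm1 c a v m := by
  have ht1 : (1 : ℝ) ≤ (t : ℝ) - 1 := by
    have : (2 : ℝ) ≤ t := by exact_mod_cast ht
    linarith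
  have hcard : ((Finset.univ.erase m).card : ℝ) = (t : ℝ) - 1 := by
    rw [Finset.card_erase_of_mem (Finset.mem_univ m), Finset.card_univ, Fintype.card_fin,
      Nat.cast_sub (by omega), Nat.cast_one]
  refine Finset.sum_lt_of_forall_card_mul_lt ?_ fun i hi => ?_
  · rw [← Finset.card_pos, ← Nat.cast_pos (α := ℝ), hcard]
    linarith
  have hi : i ≠ m := Finset.ne_of_mem_erase hi
  have hslope : 1 ≤ |(a m : ℝ) - a i| := by
    exact_mod_cast Int.one_le_abs (sub_ne_zero.2 (ha.ne hi.symm))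
  have hsep := affine_add_lt_of_forall_mem_Ioo_lt hslope (fun u hu => hm u hu i hi)
    (Real.log_nonneg ht1) hv
  rw [hcard, tropTerm1_eq_exp (hc i), tropTerm1_eq_exp (hc m),
    ← Real.exp_log (zero_lt_one.trans_le ht1), ← Real.exp_add, Real.exp_lt_exp]
  linarith

end Tropical

section Upoly

variable {t : ℕ} {c : Fin t → ℂ} {a : Fin t → ℤ}

theorem eval_zero_upolyP (hnn : ∀ i, 0 ≤ a i) (ha : Function.Injective a) {i₀ : Fin t}
    (h0 : a i₀ = 0) : (upolyP c a).eval 0 = c i₀ := by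
  rw [upolyP, eval_finsetSum, Finset.sum_eq_single i₀]
  · simp [h0]
  · intro i _ hi
    have : (a i).toNat ≠ 0 := by have := hnn i; have := ha.ne hi; omega
    simp [zero_pow this]
  · simp

theorem zero_notMem_roots_upolyP (hnn : ∀ i, 0 ≤ a i) (ha : Function.Injective a) {i₀ : Fin t}
    (h0 : a i₀ = 0) (hc : c i₀ ≠ 0) : (0 : ℂ) ∉ (upolyP c a).roots := fun h =>
  hc ((eval_zero_upolyP hnn ha h0).symm.trans (isRoot_of_mem_roots h))

theorem natDegree_upolyP (hnn : ∀ i, 0 ≤ a i) (ha : Function.Injective a) {j : Fin t}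
    (hj : ∀ i, a i ≤ a j) (hc : c j ≠ 0) : (upolyP c a).natDegree = (a j).toNat := by
  refine natDegree_eq_of_le_of_coeff_ne_zero ?_ ?_
  · exact natDegree_sum_le_of_forall_le _ _ fun i _ =>
      (natDegree_C_mul_X_pow_le _ _).trans (Int.toNat_le_toNat (hj i))
  · rw [upolyP, finsetSum_coeff, Finset.sum_eq_single j]
    · simpa [coeff_C_mul_X_pow] using hc
    · intro i _ hi
      have : (a j).toNat ≠ (a i).toNat := by
        have := hnn i; have := hnn j; have := ha.ne hi; omega
      simp [this]
    · simp

theorem card_roots_upolyP_mem_ball_exp (hnn : ∀ i, 0 ≤ a i) {m : Fin t} (hcm : c m ≠ 0)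
    {v : ℝ} (hdom : ∑ i ∈ Finset.univ.erase m, tropTerm1 c a v i < tropTerm1 c a v m) :
    ((upolyP c a).roots.filter (· ∈ ball 0 (Real.exp v))).card = (a m).toNat := by
  have hsplit : upolyP c a = C (c m) * X ^ (a m).toNat +
      ∑ i ∈ Finset.univ.erase m, C (c i) * X ^ (a i).toNat :=
    (Finset.add_sum_erase _ _ (Finset.mem_univ m)).symm
  rw [hsplit, card_roots_filter_mem_ball_add_of_norm_lt (Real.exp_pos v), roots_C_mul_X_pow hcm,
    Multiset.filter_eq_self.2]
  · simp
  · intro z hz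
    obtain rfl := Multiset.mem_singleton.1 (Multiset.mem_of_mem_nsmul hz)
    simpa using Real.exp_pos v
  · intro z hz
    have hz' : ‖z‖ = Real.exp v := by simpa using hz
    simp only [eval_finsetSum, eval_mul, eval_C, eval_pow, eval_X]
    calc ‖∑ i ∈ Finset.univ.erase m, c i * z ^ (a i).toNat‖
        ≤ ∑ i ∈ Finset.univ.erase m, ‖c i * z ^ (a i).toNat‖ := norm_sum_le _ _
      _ = ∑ i ∈ Finset.univ.erase m, tropTerm1 c a v i :=
        Finset.sum_congr rfl fun i _ => norm_monomial_eq_tropTerm1 (hnn i) hz'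
      _ < tropTerm1 c a v m := hdom
      _ = ‖c m * z ^ (a m).toNat‖ := (norm_monomial_eq_tropTerm1 (hnn m) hz').symm

end Upoly

/-- If consecutive points `σ < σ'` of `ArchTrop(f)` satisfy `σ' > σ + 2·log(t-1)`, and
`m` is the index whose tropical term dominates strictly on `(σ, σ')`, then `f` has exactly
`a_m` roots (with multiplicity) with `log|ζ| ≤ σ + log(t-1)` and exactly `a_t - a_m` roots
(with multiplicity) with `log|ζ| ≥ σ' - log(t-1)`. -/
theorem stmt13 {t : ℕ} (ht : 2 ≤ t)
    (c : Fin t → ℂ) (a : Fin t → ℤ) (ha : StrictMono a) (hc : ∀ i, c i ≠ 0)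
    (ha0 : a ⟨0, by omega⟩ = 0)
    (σ σ' : ℝ)
    (hgap : σ + 2 * Real.log ((t : ℝ) - 1) < σ')
    (m : Fin t)
    (hm : ∀ v ∈ Set.Ioo σ σ', ∀ i, i ≠ m →
      (a i : ℝ) * v + Real.log (‖c i‖) <
        (a m : ℝ) * v + Real.log (‖c m‖)) :
    (((upolyP c a).roots.filter
        (fun z => Real.log (‖z‖) ≤ σ + Real.log ((t : ℝ) - 1))).card
      = (a m).toNat) ∧
    (((upolyP c a).roots.filter
        (fun z => σ' - Real.log ((t : ℝ) - 1) ≤ Real.log (‖z‖))).card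
      = (a ⟨t - 1, by omega⟩).toNat - (a m).toNat) := by
  have hnn : ∀ i, 0 ≤ a i := fun i => ha0 ▸ ha.monotone (Fin.mk_le_of_le_val (Nat.zero_le _))
  have hcount : ∀ v ∈ Set.Ioo (σ + Real.log ((t : ℝ) - 1)) (σ' - Real.log ((t : ℝ) - 1)),
      ((upolyP c a).roots.filter (fun z => Real.log ‖z‖ < v)).card = (a m).toNat := by
    intro v hv
    rw [← card_roots_upolyP_mem_ball_exp hnn (hc m)
      (sum_tropTerm1_erase_lt ht ha.injective hc hm hv)]
    refine congrArg _ (Multiset.filter_congr fun z hz => ?_)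
    have hz0 : z ≠ 0 := by
      rintro rfl
      exact zero_notMem_roots_upolyP hnn ha.injective ha0 (hc _) hz
    rw [mem_ball_zero_iff, Real.log_lt_iff_lt_exp (norm_pos_iff.2 hz0)]
  obtain ⟨hlow, hhigh⟩ := Multiset.card_filter_le_and_card_filter_ge_of_card_filter_lt_eq _
    (fun z => Real.log ‖z‖) (by linarith) hcount
  refine ⟨hlow, ?_⟩
  rw [hhigh, IsAlgClosed.card_roots_eq_natDegree, natDegree_upolyP (j := ⟨t - 1, by omega⟩) hnn
    ha.injective (fun i => ha.monotone (Nat.le_sub_one_of_lt i.isLt)) (hc _)]
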